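/- Every unicycle digraph has at most two kernels; that is, a weakly connected finite digraph containing at most one cycle has 0, 1, or 2 kernels. -/

import Mathlib

/-- A digraph on the vertex set `Fin n`: a loopless Boolean arc relation (no multiple arcs
in the same direction, but the two opposite arcs may both be present). -/
structure FinDigraph (n : ℕ) where
  arc : Fin n → Fin n → Bool
  loopless : ∀ v, arc v v = false

/-- The number of arcs of a digraph. -/
def arcCount {n : ℕ} (D : FinDigraph n) : ℕ :=
  (Finset.univ.filter fun p : Fin n × Fin n => D.arc p.1 p.2 = true).card

/-- Weak connectivity: the underlying undirected graph is connected. -/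
def WeaklyConnected {n : ℕ} (D : FinDigraph n) : Prop :=
  (SimpleGraph.fromRel fun v w => D.arc v w = true).Connected

/-- A unicycle digraph: weakly connected with at most one cycle (a cycle being a closed
undirected path of length ≥ 2, a pair of opposite arcs counting as a cycle of length 2).
For a weakly connected digraph this is equivalent to having at most as many arcs as
vertices. -/
def IsUnicycle {n : ℕ} (D : FinDigraph n) : Prop :=
  WeaklyConnected D ∧ arcCount D ≤ n

/-- A unicircuit digraph: a unicycle digraph whose cycle, if it exists (i.e. when the
number of arcs equals the number of vertices), is a directed circuit (equivalently, there
is a directed closed walk). -/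
def IsUnicircuit {n : ℕ} (D : FinDigraph n) : Prop :=
  IsUnicycle D ∧
    (arcCount D = n → ∃ v, Relation.TransGen (fun a b => D.arc a b = true) v v)

/-- A kernel of a digraph: a nonempty independent dominating set of vertices. -/
def IsKernel {n : ℕ} (D : FinDigraph n) (K : Finset (Fin n)) : Prop :=
  K.Nonempty ∧ (∀ a ∈ K, ∀ b ∈ K, D.arc a b = false) ∧
    (∀ a, a ∉ K → ∃ b ∈ K, D.arc a b = true)

/-!
Suppose three kernels were distinct, and let `T` be the set of vertices on which they do not all
agree. A vertex lying in one kernel `A` and outside another kernel `B` has an arc into `B \ A`,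
so every vertex of `T` has an out-neighbour in `T`. In a weakly connected digraph with at most as
many arcs as vertices, comparing the number of components of the subdigraph spanned by `T` with
the number of arcs missing from it shows that this subdigraph is weakly connected and that every
vertex of `T` has exactly one out-neighbour in `T`. That out-neighbour must then swap membership in
every kernel, so the pattern of which kernels agree at a vertex is the same all over `T`. Hence the
three pairwise disagreements occur at a single vertex, which is impossible with two truth values.
-/

open Finset SimpleGraph

namespace SimpleGraph

variable {V : Type*} [Finite V]

theorem card_le_card_connectedComponent {G : SimpleGraph V} (s : Finset V)
    (hs : (s : Set V).Pairwise fun u v => ¬G.Reachable u v) :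
    #s ≤ Nat.card G.ConnectedComponent := by
  have hinj : Function.Injective fun v : s => G.connectedComponentMk v := by
    rintro ⟨u, hu⟩ ⟨v, hv⟩ huv
    by_contra hne
    exact hs hu hv (fun h => hne (Subtype.ext h)) (ConnectedComponent.exact huv)
  simpa using Nat.card_le_card_of_injective _ hinj

theorem Connected.card_connectedComponent_le_ncard_edgeSet_sdiff_add_one
    {G : SimpleGraph V} (hG : G.Connected) (G' : SimpleGraph V) :
    Nat.card G'.ConnectedComponent ≤ (G.edgeSet \ G'.edgeSet).ncard + 1 := by
  let κ := G'.connectedComponentMk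
  -- `G` with the components of `G'` contracted to points
  let H : SimpleGraph G'.ConnectedComponent :=
    fromEdgeSet (Sym2.map κ '' (G.edgeSet \ G'.edgeSet))
  have hstep : ∀ u v, G.Adj u v → Relation.ReflTransGen H.Adj (κ u) (κ v) := by
    intro u v huv
    by_cases hκ : κ u = κ v
    · rw [hκ]
    refine .single ⟨⟨s(u, v), ⟨huv, fun h' => hκ ?_⟩, rfl⟩, hκ⟩
    exact ConnectedComponent.eq.mpr h'.reachable
  have hH : H.Connected := by
    have := hG.nonempty
    refine ⟨ConnectedComponent.ind₂ fun u v => ?_⟩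
    rw [reachable_iff_reflTransGen]
    exact Relation.ReflTransGen.lift' κ hstep _ _ ((reachable_iff_reflTransGen u v).mp (hG u v))
  calc Nat.card G'.ConnectedComponent ≤ Nat.card H.edgeSet + 1 :=
        hH.card_vert_le_card_edgeSet_add_one
    _ ≤ (Sym2.map κ '' (G.edgeSet \ G'.edgeSet)).ncard + 1 := by
        rw [Nat.card_coe_set_eq, edgeSet_fromEdgeSet]
        gcongr
        · exact Set.toFinite _
        · exact Set.sdiff_subset
    _ ≤ (G.edgeSet \ G'.edgeSet).ncard + 1 := by
        gcongr
        exact Set.ncard_image_le (Set.toFinite _)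

end SimpleGraph

theorem IsKernel.exists_arc_mem_notMem {n : ℕ} {D : FinDigraph n} {A B : Finset (Fin n)}
    (hA : IsKernel D A) (hB : IsKernel D B) {v : Fin n} (hvA : v ∈ A) (hvB : v ∉ B) :
    ∃ w ∈ B, w ∉ A ∧ D.arc v w = true := by
  obtain ⟨w, hwB, hvw⟩ := hB.2.2 v hvB
  refine ⟨w, hwB, fun hwA => ?_, hvw⟩
  simp [hA.2.1 v hvA w hwA] at hvw

namespace FinDigraph

variable {n : ℕ}

def undirected (D : FinDigraph n) : SimpleGraph (Fin n) :=
  fromRel fun v w => D.arc v w = true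

theorem undirected_adj {D : FinDigraph n} {v w : Fin n} :
    D.undirected.Adj v w ↔ D.arc v w = true ∨ D.arc w v = true := by
  refine ⟨And.right, fun h => ⟨?_, h⟩⟩
  rintro rfl
  simp [D.loopless] at h

def restrict (D : FinDigraph n) (T : Finset (Fin n)) : FinDigraph n where
  arc v w := D.arc v w && decide (v ∈ T) && decide (w ∈ T)
  loopless v := by simp [D.loopless]

@[simp]
theorem restrict_arc {D : FinDigraph n} {T : Finset (Fin n)} {v w : Fin n} :
    (D.restrict T).arc v w = true ↔ D.arc v w = true ∧ v ∈ T ∧ w ∈ T := by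
  simp [restrict, and_assoc]

theorem ncard_edgeSet_sdiff_add_arcCount_le {D D' : FinDigraph n}
    (h : ∀ v w, D'.arc v w = true → D.arc v w = true) :
    (D.undirected.edgeSet \ D'.undirected.edgeSet).ncard + arcCount D' ≤ arcCount D := by
  let arcs (E : FinDigraph n) := univ.filter fun p : Fin n × Fin n => E.arc p.1 p.2 = true
  have hsub : arcs D' ⊆ arcs D := fun p hp => by simp_all [arcs]
  have hcover : D.undirected.edgeSet \ D'.undirected.edgeSet ⊆
      (fun p : Fin n × Fin n => s(p.1, p.2)) '' ↑(arcs D \ arcs D') := by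
    rintro ⟨a, b⟩ ⟨hab, hab'⟩
    simp only [mem_edgeSet, undirected_adj] at hab hab'
    rcases hab with hab | hba
    · exact ⟨(a, b), by simp_all [arcs]⟩
    · exact ⟨(b, a), by simp_all [arcs], Sym2.eq_swap⟩
  calc (D.undirected.edgeSet \ D'.undirected.edgeSet).ncard + arcCount D'
      ≤ #(arcs D \ arcs D') + arcCount D' := by
        gcongr
        calc _ ≤ _ := Set.ncard_le_ncard hcover (Set.toFinite _)
          _ ≤ (↑(arcs D \ arcs D') : Set (Fin n × Fin n)).ncard :=
            Set.ncard_image_le (finite_toSet _)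
          _ = _ := Set.ncard_coe_finset _
    _ = arcCount D := card_sdiff_add_card_eq_card hsub

theorem eq_of_reachable_restrict_of_notMem {D : FinDigraph n} {T : Finset (Fin n)}
    {u v : Fin n} (hu : u ∉ T) (h : (D.restrict T).undirected.Reachable u v) : u = v := by
  rw [reachable_iff_reflTransGen, Relation.ReflTransGen.cases_head_iff] at h
  obtain h | ⟨w, huw, -⟩ := h
  · exact h
  · rw [undirected_adj, restrict_arc, restrict_arc] at huw
    tauto

theorem arcCount_restrict (D : FinDigraph n) (T : Finset (Fin n)) :
    arcCount (D.restrict T) = ∑ v ∈ T, #{w ∈ T | D.arc v w = true} := by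
  rw [arcCount, card_filter, Fintype.sum_prod_type]
  simp only [restrict_arc, and_rotate, ite_and, sum_ite_irrel, sum_const_zero, Fintype.sum_ite_mem,
    card_filter]

section OutNeighbours

variable {D : FinDigraph n} {T : Finset (Fin n)}

theorem one_le_card_filter_arc (hT : ∀ v ∈ T, ∃ w ∈ T, D.arc v w = true) {v : Fin n}
    (hv : v ∈ T) : 1 ≤ #{w ∈ T | D.arc v w = true} := by
  obtain ⟨w, hw, hvw⟩ := hT v hv
  exact card_pos.mpr ⟨w, mem_filter.mpr ⟨hw, hvw⟩⟩

theorem card_le_arcCount_restrict (hT : ∀ v ∈ T, ∃ w ∈ T, D.arc v w = true) :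
    #T ≤ arcCount (D.restrict T) := by
  rw [arcCount_restrict, card_eq_sum_ones]
  exact sum_le_sum fun v hv => one_le_card_filter_arc hT hv

end OutNeighbours

open Classical in
noncomputable def disagreementSet {ι : Type*} (K : ι → Finset (Fin n)) : Finset (Fin n) :=
  {v | ∃ i j, v ∈ K i ∧ v ∉ K j}

variable {ι : Type*} {K : ι → Finset (Fin n)}

theorem mem_disagreementSet {v : Fin n} :
    v ∈ disagreementSet K ↔ ∃ i j, v ∈ K i ∧ v ∉ K j := by
  simp [disagreementSet]

theorem exists_arc_disagreementSet {D : FinDigraph n} (hK : ∀ i, IsKernel D (K i)) {v : Fin n}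
    (hv : v ∈ disagreementSet K) : ∃ w ∈ disagreementSet K, D.arc v w = true := by
  obtain ⟨i, j, hi, hj⟩ := mem_disagreementSet.mp hv
  obtain ⟨w, hwj, hwi, hvw⟩ := (hK i).exists_arc_mem_notMem (hK j) hi hj
  exact ⟨w, mem_disagreementSet.mpr ⟨j, i, hwj, hwi⟩, hvw⟩

end FinDigraph

namespace IsUnicycle

open FinDigraph

variable {n : ℕ} {D : FinDigraph n}

theorem card_add_arcCount_restrict_le (hD : IsUnicycle D) {T s : Finset (Fin n)} (hsT : s ⊆ T)
    (hs : (s : Set (Fin n)).Pairwise fun u v => ¬(D.restrict T).undirected.Reachable u v) :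
    #s + arcCount (D.restrict T) ≤ #T + 1 := by
  have hsep : ((Tᶜ ∪ s : Finset (Fin n)) : Set (Fin n)).Pairwise
      fun u v => ¬(D.restrict T).undirected.Reachable u v := by
    intro u hu v hv hne huv
    simp only [coe_union, coe_compl, Set.mem_union, Set.mem_compl_iff, mem_coe] at hu hv
    by_cases huT : u ∈ T
    · by_cases hvT : v ∈ T
      · exact hs (hu.resolve_left (not_not.mpr huT)) (hv.resolve_left (not_not.mpr hvT)) hne huv
      · exact hne (eq_of_reachable_restrict_of_notMem hvT huv.symm).symm
    · exact hne (eq_of_reachable_restrict_of_notMem huT huv)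
  have hcard : #(Tᶜ ∪ s) = n - #T + #s := by
    rw [card_union_of_disjoint (disjoint_compl_left.mono_right hsT), card_compl, Fintype.card_fin]
  have hT : #T ≤ n := by simpa using card_le_univ T
  have hconn : D.undirected.Connected := hD.1
  have hlower := card_le_card_connectedComponent _ hsep
  have hupper :=
    hconn.card_connectedComponent_le_ncard_edgeSet_sdiff_add_one (D.restrict T).undirected
  have hmissing := ncard_edgeSet_sdiff_add_arcCount_le (D := D) (D' := D.restrict T)
    fun v w h => (restrict_arc.mp h).1
  have harcs : arcCount D ≤ n := hD.2
  omega

section OutNeighbours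

variable {T : Finset (Fin n)}

theorem eq_of_arc_of_arc (hD : IsUnicycle D) (hT : ∀ v ∈ T, ∃ w ∈ T, D.arc v w = true)
    {v w w' : Fin n} (hv : v ∈ T) (hw : w ∈ T) (hw' : w' ∈ T) (h : D.arc v w = true)
    (h' : D.arc v w' = true) : w = w' := by
  by_contra hne
  have hlt : #T < arcCount (D.restrict T) := by
    rw [arcCount_restrict, card_eq_sum_ones]
    exact sum_lt_sum (fun u hu => one_le_card_filter_arc hT hu)
      ⟨v, hv, one_lt_card.mpr ⟨w, mem_filter.mpr ⟨hw, h⟩, w', mem_filter.mpr ⟨hw', h'⟩, hne⟩⟩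
  have := hD.card_add_arcCount_restrict_le (singleton_subset_iff.mpr hv) (by simp)
  rw [card_singleton] at this
  omega

theorem reachable_restrict (hD : IsUnicycle D) (hT : ∀ v ∈ T, ∃ w ∈ T, D.arc v w = true)
    {u v : Fin n} (hu : u ∈ T) (hv : v ∈ T) : (D.restrict T).undirected.Reachable u v := by
  by_contra huv
  have hne : u ≠ v := by
    rintro rfl
    exact huv (Reachable.refl u)
  have := hD.card_add_arcCount_restrict_le (T := T) (s := {u, v})
    (by simp [insert_subset_iff, hu, hv])
    (by simpa [coe_pair, Set.pairwise_pair, reachable_comm] using fun _ => huv)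
  rw [card_pair hne] at this
  have := card_le_arcCount_restrict hT
  omega

end OutNeighbours

variable {ι : Type*} {K : ι → Finset (Fin n)}

/-- Every kernel swap out of `v` has to use the unique arc from `v` into the disagreement set. -/
theorem mem_iff_notMem_of_arc (hD : IsUnicycle D) (hK : ∀ i, IsKernel D (K i)) {v u : Fin n}
    (hv : v ∈ disagreementSet K) (hu : u ∈ disagreementSet K) (hvu : D.arc v u = true) (i : ι) :
    u ∈ K i ↔ v ∉ K i := by
  have huniq : ∀ w ∈ disagreementSet K, D.arc v w = true → w = u := fun w hw hvw =>
    hD.eq_of_arc_of_arc (fun _ => exists_arc_disagreementSet hK) hv hw hu hvw hvu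
  obtain ⟨i₀, j₀, hi₀, hj₀⟩ := mem_disagreementSet.mp hv
  by_cases hvi : v ∈ K i
  · obtain ⟨w, hwj, hwi, hvw⟩ := (hK i).exists_arc_mem_notMem (hK j₀) hvi hj₀
    rw [← huniq w (mem_disagreementSet.mpr ⟨j₀, i, hwj, hwi⟩) hvw]
    exact iff_of_false hwi (not_not.mpr hvi)
  · obtain ⟨w, hwi, hwi₀, hvw⟩ := (hK i₀).exists_arc_mem_notMem (hK i) hi₀ hvi
    rw [← huniq w (mem_disagreementSet.mpr ⟨i, i₀, hwi, hwi₀⟩) hvw]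
    exact iff_of_true hwi hvi

theorem mem_iff_mem_iff_of_reachable (hD : IsUnicycle D) (hK : ∀ i, IsKernel D (K i))
    {u v : Fin n} (h : (D.restrict (disagreementSet K)).undirected.Reachable u v) (i j : ι) :
    (u ∈ K i ↔ u ∈ K j) ↔ (v ∈ K i ↔ v ∈ K j) := by
  have hstep : ∀ {a b}, (D.restrict (disagreementSet K)).arc a b = true →
      ((a ∈ K i ↔ a ∈ K j) ↔ (b ∈ K i ↔ b ∈ K j)) := by
    intro a b hab
    rw [restrict_arc] at hab
    have hi := hD.mem_iff_notMem_of_arc hK hab.2.1 hab.2.2 hab.1 i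
    have hj := hD.mem_iff_notMem_of_arc hK hab.2.1 hab.2.2 hab.1 j
    tauto
  rw [reachable_iff_reflTransGen] at h
  induction h with
  | refl => rfl
  | tail _ hwx ih =>
    rcases undirected_adj.mp hwx with h | h
    exacts [ih.trans (hstep h), ih.trans (hstep h).symm]

theorem eq_or_eq_or_eq_of_isKernel (hD : IsUnicycle D) (hK : ∀ i, IsKernel D (K i))
    (i j k : ι) : K i = K j ∨ K i = K k ∨ K j = K k := by
  have witness : ∀ {a b}, K a ≠ K b → ∃ v ∈ disagreementSet K, ¬(v ∈ K a ↔ v ∈ K b) := by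
    intro a b hab
    obtain ⟨v, hv⟩ : ∃ v, ¬(v ∈ K a ↔ v ∈ K b) := by
      by_contra! h
      exact hab (Finset.ext h)
    refine ⟨v, ?_, hv⟩
    by_cases ha : v ∈ K a
    · exact mem_disagreementSet.mpr ⟨a, b, ha, fun hb => hv (iff_of_true ha hb)⟩
    · exact mem_disagreementSet.mpr ⟨b, a, by tauto, ha⟩
  by_contra! h
  obtain ⟨x, hx, hxij⟩ := witness h.1
  obtain ⟨y, hy, hyik⟩ := witness h.2.1
  obtain ⟨z, hz, hzjk⟩ := witness h.2.2
  have hout : ∀ v ∈ disagreementSet K, ∃ w ∈ disagreementSet K, D.arc v w = true :=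
    fun _ => exists_arc_disagreementSet hK
  have hxik : ¬(x ∈ K i ↔ x ∈ K k) := fun h =>
    hyik ((hD.mem_iff_mem_iff_of_reachable hK (hD.reachable_restrict hout hx hy) i k).mp h)
  have hxjk : ¬(x ∈ K j ↔ x ∈ K k) := fun h =>
    hzjk ((hD.mem_iff_mem_iff_of_reachable hK (hD.reachable_restrict hout hx hz) j k).mp h)
  grind

end IsUnicycle

/-- Every unicycle digraph (weakly connected finite digraph with at most one cycle)
has at most two kernels. -/
theorem stmt12 (n : ℕ) (D : FinDigraph n) (hD : IsUnicycle D) :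
    Nat.card {K : Finset (Fin n) // IsKernel D K} ≤ 2 := by
  by_contra! h
  have := Fintype.ofFinite {K // IsKernel D K}
  rw [Nat.card_eq_fintype_card] at h
  obtain ⟨K₁, K₂, K₃, h₁₂, h₁₃, h₂₃⟩ := Fintype.two_lt_card_iff.mp h
  rcases hD.eq_or_eq_or_eq_of_isKernel (K := Subtype.val) Subtype.prop K₁ K₂ K₃ with h | h | h
  exacts [h₁₂ (Subtype.ext h), h₁₃ (Subtype.ext h), h₂₃ (Subtype.ext h)]
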